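/- arXiv:0802.3511 — 7 statements merged into one kernel-verified Lean document; each statement's English description precedes it below -/
import Mathlib

section
/- For every term t of the free algebra F_⊗(V) on one n-ary operation, t is related to its left-most bracketing lmb(t) by the n-Catalan congruence: t ≈ lmb(t). -/
/-- Terms of the free algebra on one `n`-ary operation. -/
inductive CTerm (V : Type*) (n : ℕ) : Type _
  | var : V → CTerm V n
  | op : (Fin n → CTerm V n) → CTerm V n

namespace CTerm

variable {V : Type*} {n : ℕ}

/-- The term `⊗(s_0,…,s_{p-1}, ⊗(s_p,…,s_{p+n-1}), s_{p+n},…,s_{2n-2})`: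
the outer `n`-ary bracketing of the `2n-1` terms `s` with an inner bracket
("pivot") at (0-based) position `p`. -/
def catAt (p : ℕ) (_hp : p < n) (s : Fin (2 * n - 1) → CTerm V n) : CTerm V n :=
  .op fun q =>
    if (q : ℕ) < p then s ⟨q, by have := q.isLt; omega⟩
    else if (q : ℕ) = p then
      .op fun k => s ⟨p + k, by have := q.isLt; have := k.isLt; omega⟩
    else s ⟨(q : ℕ) + n - 1, by have := q.isLt; omega⟩

/-- The underlying list of variables of a term. -/
def U : CTerm V n → List V
  | .var v => [v]
  | .op f => (List.ofFn fun i => U (f i)).flatten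

/-- Left-most bracketing of a nonempty list of terms (head + tail). -/
def lmbAux : CTerm V n → List (CTerm V n) → CTerm V n
  | t, [] => t
  | t, r :: rs =>
    if h : 2 ≤ n ∧ n ≤ rs.length + 2 then
      lmbAux (.op fun i => (t :: r :: rs).getD i t) ((r :: rs).drop (n - 1))
    else t
  termination_by _ l => l.length
  decreasing_by simp [List.length_drop]; omega

/-- Left-most bracketing of a term. -/
def lmb (t : CTerm V n) : CTerm V n :=
  match (U t).map (CTerm.var (n := n)) with
  | [] => t
  | h :: tl => lmbAux h tl

/-- Length of a term. -/
def L : CTerm V n → ℕ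
  | .var _ => 1
  | .op f => ∑ i, L (f i)

/-- Rank of a term. -/
def R : CTerm V n → ℤ
  | .var _ => 0
  | .op f => (∑ i, R (f i)) + (∑ i : Fin n, ((i : ℕ) : ℤ) * (L (f i) : ℤ)) - (n * (n - 1) : ℤ) / 2

end CTerm

/-- The `n`-Catalan congruence on `CTerm V n`. -/
inductive CatRel (V : Type*) (n : ℕ) : CTerm V n → CTerm V n → Prop
  | refl (t) : CatRel V n t t
  | symm {t t'} : CatRel V n t t' → CatRel V n t' t
  | trans {t t' t''} : CatRel V n t t' → CatRel V n t' t'' → CatRel V n t t''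
  | compat {f g : Fin n → CTerm V n} :
      (∀ j, CatRel V n (f j) (g j)) → CatRel V n (.op f) (.op g)
  | assoc (i : ℕ) (hi : i + 1 < n) (s : Fin (2 * n - 1) → CTerm V n) :
      CatRel V n (CTerm.catAt (i + 1) hi s) (CTerm.catAt i (by omega) s)

/-- The symmetric `n`-Catalan congruence on `CTerm V n`. -/
inductive SymCatRel (V : Type*) (n : ℕ) : CTerm V n → CTerm V n → Prop
  | refl (t) : SymCatRel V n t t
  | symm {t t'} : SymCatRel V n t t' → SymCatRel V n t' t
  | trans {t t' t''} : SymCatRel V n t t' → SymCatRel V n t' t'' → SymCatRel V n t t''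
  | compat {f g : Fin n → CTerm V n} :
      (∀ j, SymCatRel V n (f j) (g j)) → SymCatRel V n (.op f) (.op g)
  | assoc (i : ℕ) (hi : i + 1 < n) (s : Fin (2 * n - 1) → CTerm V n) :
      SymCatRel V n (CTerm.catAt (i + 1) hi s) (CTerm.catAt i (by omega) s)
  | swap (i : ℕ) (hi : i + 1 < n) (s : Fin n → CTerm V n) :
      SymCatRel V n (.op s) (.op (s ∘ Equiv.swap ⟨i, by omega⟩ ⟨i + 1, hi⟩))


/-! Read `lmbAux t l` as the left comb on the terms `t :: l`. Any argument of a complete comb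
may be replaced by the list of its variables. For an argument `⊗ g` this is a single flattening
step: the chunk of the comb holding `⊗ g` and the next chunk, taken together, form the `2n - 1`
terms of a Catalan relator with the inner bracket at some position `p` on one side and at `0` on
the other, and the associativity moves connect the two. Flattening arguments recursively, and
unfolding the head through `lmbAux (⊗ f) m = lmbAux (f 0) (f 1, …, f (n-1), m)`, turns `t` into
`lmb t`. All argument lists keep a length divisible by `n - 1`, so no chunk is ever truncated. -/

theorem List.ofFn_eq_cons_tail {α : Type*} {n : ℕ} (hn : 0 < n) (f : Fin n → α) :
    List.ofFn f = f ⟨0, hn⟩ :: (List.ofFn f).tail := by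
  have h := List.cons_head_tail (l := List.ofFn f) (by simp; omega)
  rw [List.head_ofFn] at h
  exact h.symm

namespace CTerm

variable {V : Type*} {n : ℕ}

local infix:50 " ∼ " => CatRel _ _

instance : Trans (CatRel V n) (CatRel V n) (CatRel V n) := ⟨CatRel.trans⟩

theorem catRel_catAt_zero {p : ℕ} (hp : p < n) (s : Fin (2 * n - 1) → CTerm V n) :
    catAt p hp s ∼ catAt 0 (by omega) s := by
  induction p with
  | zero => exact .refl _
  | succ p ih => exact (CatRel.assoc p hp s).trans (ih _)

theorem catAt_eq_op_getD (a b c : List (CTerm V n)) (d : CTerm V n) (hp : a.length < n)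
    (hb : b.length = n) (hc : a.length + c.length = n - 1) :
    catAt a.length hp (fun j => (a ++ b ++ c).getD j d) =
      .op fun i => (a ++ (CTerm.op fun k => b.getD k d) :: c).getD i d := by
  unfold catAt
  congr 1
  funext q
  have := q.isLt
  split_ifs with h₁ h₂
  · simp [List.getElem?_append_left, h₁]
  · simp [List.getElem?_append_right, h₂, hb]
    funext k
    simp [List.getElem?_append_left, hb]
  · have hq : (q : ℕ) - a.length = (q - a.length - 1) + 1 := by omega
    simp only [List.append_assoc]
    rw [List.getD_append_right _ _ _ _ (by omega), List.getD_append_right _ _ _ _ (by omega),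
      List.getD_append_right _ _ _ _ (by omega), hq, List.getD_cons_succ, hb]
    congr 1
    omega

theorem op_getD_ofFn (g : Fin n → CTerm V n) (d : CTerm V n) :
    (CTerm.op fun i : Fin n => (List.ofFn g).getD i d) = .op g := by
  simp

theorem lmbAux_of_length_lt (t : CTerm V n) {l : List (CTerm V n)} (h : l.length < n - 1) :
    lmbAux t l = t := by
  match l with
  | [] => rw [lmbAux]
  | r :: rs =>
    rw [lmbAux, dif_neg]
    simp only [List.length_cons] at h
    omega

-- `d` is arbitrary: all `n` positions read by `getD` lie inside `t :: l₁`.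
theorem lmbAux_append (hn : 2 ≤ n) (t d : CTerm V n) {l₁ : List (CTerm V n)}
    (l₂ : List (CTerm V n)) (h : l₁.length = n - 1) :
    lmbAux t (l₁ ++ l₂) = lmbAux (.op fun i => (t :: l₁).getD i d) l₂ := by
  match l₁ with
  | [] => simp at h; omega
  | r :: rs =>
    simp only [List.length_cons] at h
    rw [List.cons_append, lmbAux, dif_pos (by simp; omega), ← List.cons_append,
      List.drop_left' (by simp; omega)]
    congr 2
    funext i
    have hi : (i : ℕ) < (t :: r :: rs).length := by simp; omega
    rw [← List.cons_append, List.getD_append _ _ _ _ hi, List.getD_eq_getElem _ _ hi,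
      List.getD_eq_getElem _ _ hi]

theorem lmbAux_op (hn : 2 ≤ n) (f : Fin n → CTerm V n) (m : List (CTerm V n)) :
    lmbAux (.op f) m = lmbAux (f ⟨0, by omega⟩) ((List.ofFn f).tail ++ m) := by
  rw [lmbAux_append hn _ (f ⟨0, by omega⟩) m (by simp), ← List.ofFn_eq_cons_tail,
    op_getD_ofFn]

theorem lmbAux_congr (hn : 2 ≤ n) {t t' : CTerm V n} (h : t ∼ t') (l : List (CTerm V n)) :
    lmbAux t l ∼ lmbAux t' l := by
  induction hk : l.length using Nat.strong_induction_on generalizing t t' l with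
  | _ k ih =>
  by_cases hl : n - 1 ≤ l.length
  · obtain ⟨l₁, l₂, rfl, hl₁⟩ : ∃ l₁ l₂, l = l₁ ++ l₂ ∧ l₁.length = n - 1 :=
      ⟨_, _, (List.take_append_drop (n - 1) l).symm, by simp; omega⟩
    rw [lmbAux_append hn t t l₂ hl₁, lmbAux_append hn t' t l₂ hl₁]
    refine ih l₂.length (by simp at hk; omega) (CatRel.compat fun i => ?_) l₂ rfl
    rcases i with ⟨_ | j, hj⟩
    · exact h
    · exact .refl _
  · rwa [lmbAux_of_length_lt t (by omega), lmbAux_of_length_lt t' (by omega)]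

theorem lmbAux_flatten_op_of_length_eq (hn : 2 ≤ n) (t : CTerm V n) (g : Fin n → CTerm V n)
    {pre mid : List (CTerm V n)} (post : List (CTerm V n))
    (hlen : pre.length + 1 + mid.length = n - 1) :
    lmbAux t (pre ++ .op g :: (mid ++ post)) ∼
      lmbAux t (pre ++ (List.ofFn g ++ (mid ++ post))) := by
  obtain ⟨g₁, g₂, hg, hg₁⟩ : ∃ g₁ g₂, List.ofFn g = g₁ ++ g₂ ∧ g₁.length = n - 1 - pre.length :=
    ⟨_, _, (List.take_append_drop (n - 1 - pre.length) _).symm, by simp; omega⟩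
  have hg₂ : g₂.length = pre.length + 1 := by
    have := congrArg List.length hg
    simp at this
    omega
  set s : Fin (2 * n - 1) → CTerm V n := fun j => ((t :: pre) ++ List.ofFn g ++ mid).getD j t
  have hlhs : lmbAux t (pre ++ .op g :: (mid ++ post)) =
      lmbAux (catAt (t :: pre).length (by simp; omega) s) post := by
    calc lmbAux t (pre ++ .op g :: (mid ++ post))
        = lmbAux t ((pre ++ .op g :: mid) ++ post) := by simp
      _ = lmbAux (.op fun i => (t :: (pre ++ .op g :: mid)).getD i t) post :=
        lmbAux_append hn t t post (by simp; omega)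
      _ = _ := by
        rw [catAt_eq_op_getD _ _ _ _ _ (by simp) (by simp; omega), op_getD_ofFn]
        rfl
  have hrhs : lmbAux t (pre ++ (List.ofFn g ++ (mid ++ post))) =
      lmbAux (catAt ([] : List (CTerm V n)).length (by simp; omega) s) post := by
    have hs : s = fun j => ([] ++ t :: (pre ++ g₁) ++ (g₂ ++ mid)).getD j t := by
      simp [s, hg]
    calc lmbAux t (pre ++ (List.ofFn g ++ (mid ++ post)))
        = lmbAux t ((pre ++ g₁) ++ ((g₂ ++ mid) ++ post)) := by simp [hg]
      _ = _ := by
        rw [lmbAux_append hn t t _ (by simp; omega), lmbAux_append hn _ t post (by simp; omega),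
          hs, catAt_eq_op_getD _ _ _ _ _ (by simp; omega) (by simp; omega)]
        rfl
  rw [hlhs, hrhs]
  exact lmbAux_congr hn (catRel_catAt_zero _ s) post

theorem lmbAux_flatten_op (hn : 2 ≤ n) (t : CTerm V n) (g : Fin n → CTerm V n)
    (pre post : List (CTerm V n)) (hdvd : n - 1 ∣ (pre ++ .op g :: post).length) :
    lmbAux t (pre ++ .op g :: post) ∼ lmbAux t (pre ++ List.ofFn g ++ post) := by
  induction hk : pre.length using Nat.strong_induction_on generalizing t pre with
  | _ k ih =>
  by_cases hpre : n - 1 ≤ pre.length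
  · obtain ⟨pre₁, pre₂, rfl, h₁⟩ : ∃ pre₁ pre₂, pre = pre₁ ++ pre₂ ∧ pre₁.length = n - 1 :=
      ⟨_, _, (List.take_append_drop (n - 1) pre).symm, by simp; omega⟩
    simp only [List.append_assoc]
    rw [lmbAux_append hn t t _ h₁, lmbAux_append hn t t _ h₁]
    have hdvd₂ : n - 1 ∣ (pre₂ ++ .op g :: post).length := by
      rw [List.append_assoc, List.length_append, h₁] at hdvd
      exact (Nat.dvd_add_right dvd_rfl).mp hdvd
    simpa using ih pre₂.length (by simp at hk; omega) _ pre₂ hdvd₂ rfl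
  · have hpost : n - 1 ≤ (pre ++ .op g :: post).length := Nat.le_of_dvd (by simp) hdvd
    simp only [List.length_append, List.length_cons] at hpost
    obtain ⟨mid, post', rfl, hmid⟩ : ∃ mid post', post = mid ++ post' ∧
        pre.length + 1 + mid.length = n - 1 :=
      ⟨_, _, (List.take_append_drop (n - 2 - pre.length) post).symm, by simp; omega⟩
    simpa using lmbAux_flatten_op_of_length_eq hn t g post' hmid

theorem U_op (f : Fin n → CTerm V n) : U (.op f) = (List.ofFn f).flatMap U := by
  simp [U, List.flatMap_def, List.map_ofFn, Function.comp_def]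

theorem U_ne_nil (hn : 0 < n) (t : CTerm V n) : U t ≠ [] := by
  induction t with
  | var v => simp [U]
  | op f ih =>
    rw [U_op, List.ofFn_eq_cons_tail hn]
    simp [ih ⟨0, hn⟩]

theorem length_U_modEq (hn : 0 < n) (t : CTerm V n) : (U t).length ≡ 1 [MOD n - 1] := by
  induction t with
  | var v => rfl
  | op f ih =>
    calc (U (.op f)).length = ∑ i, (U (f i)).length := by
          simp [U_op, List.length_flatMap, List.sum_ofFn]
      _ ≡ ∑ _ : Fin n, 1 [MOD n - 1] := Nat.ModEq.sum fun i _ => ih i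
      _ = n := by simp
      _ ≡ 1 [MOD n - 1] := ((Nat.modEq_iff_dvd' hn).mpr dvd_rfl).symm

def leaves (l : List (CTerm V n)) : List (CTerm V n) := (l.flatMap U).map .var

theorem length_leaves_modEq (hn : 0 < n) (l : List (CTerm V n)) :
    (leaves l).length ≡ l.length [MOD n - 1] := by
  induction l with
  | nil => rfl
  | cons s l ih =>
    simpa [leaves, add_comm] using Nat.ModEq.add (length_U_modEq hn s) ih

def Expandable (s : CTerm V n) : Prop :=
  ∀ (t : CTerm V n) (pre post : List (CTerm V n)), n - 1 ∣ (pre ++ s :: post).length →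
    lmbAux t (pre ++ s :: post) ∼ lmbAux t (pre ++ leaves [s] ++ post)

theorem lmbAux_expand_append (hn : 0 < n) {l : List (CTerm V n)} (hl : ∀ s ∈ l, Expandable s)
    (t : CTerm V n) (pre post : List (CTerm V n)) (hdvd : n - 1 ∣ (pre ++ l ++ post).length) :
    lmbAux t (pre ++ l ++ post) ∼ lmbAux t (pre ++ leaves l ++ post) := by
  induction l generalizing pre with
  | nil => simpa [leaves] using CatRel.refl _
  | cons s l ih =>
    have hdvd' : n - 1 ∣ (pre ++ leaves [s] ++ l ++ post).length := by
      refine (Nat.ModEq.dvd_iff ?_ dvd_rfl).mpr hdvd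
      have h := ((length_leaves_modEq hn [s]).add_right (l.length + post.length)).add_left
        pre.length
      simp only [List.length_append, List.length_cons, List.length_nil] at h ⊢
      convert h using 1 <;> omega
    calc lmbAux t (pre ++ s :: l ++ post)
        ∼ lmbAux t (pre ++ leaves [s] ++ (l ++ post)) := by
          simpa using hl s (by simp) t pre (l ++ post) (by simpa using hdvd)
      _ ∼ lmbAux t (pre ++ leaves [s] ++ leaves l ++ post) := by
          simpa using ih (fun s hs ↦ hl s (by simp [hs])) (pre ++ leaves [s]) hdvd'
      _ = lmbAux t (pre ++ leaves (s :: l) ++ post) := by simp [leaves]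

theorem expandable (hn : 2 ≤ n) (s : CTerm V n) : Expandable s := by
  induction s with
  | var v => exact fun t pre post _ ↦ by simpa [leaves, U] using CatRel.refl _
  | op g ih =>
    intro t pre post hdvd
    have hdvd' : n - 1 ∣ (pre ++ List.ofFn g ++ post).length := by
      have hlen : (pre ++ List.ofFn g ++ post).length =
          (pre ++ .op g :: post).length + (n - 1) := by
        simp
        omega
      exact hlen ▸ dvd_add hdvd dvd_rfl
    calc lmbAux t (pre ++ .op g :: post)
        ∼ lmbAux t (pre ++ List.ofFn g ++ post) := lmbAux_flatten_op hn t g pre post hdvd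
      _ ∼ lmbAux t (pre ++ leaves (List.ofFn g) ++ post) :=
          lmbAux_expand_append (by omega) (by simpa [List.mem_ofFn] using ih) t pre post hdvd'
      _ = lmbAux t (pre ++ leaves [.op g] ++ post) := by simp [leaves, U_op]

theorem lmbAux_expand_head (hn : 2 ≤ n) (t : CTerm V n) {h : V} {rest : List V}
    (hU : U t = h :: rest) (m : List (CTerm V n)) (hm : n - 1 ∣ m.length) :
    lmbAux t m ∼ lmbAux (.var h) (rest.map .var ++ m) := by
  induction t generalizing h rest m with
  | var v =>
    obtain ⟨rfl, rfl⟩ : v = h ∧ [] = rest := by simpa [U] using hU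
    exact .refl _
  | op f ih =>
    obtain ⟨h₀, rest₀, hf₀⟩ := List.exists_cons_of_ne_nil (U_ne_nil (by omega) (f ⟨0, by omega⟩))
    rw [U_op, List.ofFn_eq_cons_tail (by omega), List.flatMap_cons, hf₀] at hU
    obtain ⟨rfl, rfl⟩ := List.cons_eq_cons.mp hU
    have hrest₀ : n - 1 ∣ rest₀.length := by
      have h := length_U_modEq (by omega) (f ⟨0, by omega⟩)
      rw [hf₀, List.length_cons] at h
      exact Nat.modEq_zero_iff_dvd.mp (Nat.ModEq.add_right_cancel' 1 h)
    calc lmbAux (.op f) m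
        = lmbAux (f ⟨0, by omega⟩) ((List.ofFn f).tail ++ m) := lmbAux_op hn f m
      _ ∼ lmbAux (.var h₀) (rest₀.map .var ++ ((List.ofFn f).tail ++ m)) :=
          ih _ hf₀ _ (by simpa using hm)
      _ ∼ lmbAux (.var h₀) (rest₀.map .var ++ leaves (List.ofFn f).tail ++ m) := by
          have hdvd : n - 1 ∣ (rest₀.map CTerm.var ++ (List.ofFn f).tail ++ m).length := by
            simpa using (Nat.dvd_add_right hrest₀).mpr ((Nat.dvd_add_right (by simp)).mpr hm)
          simpa using lmbAux_expand_append (by omega) (fun s _ ↦ expandable hn s) (.var h₀)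
            (rest₀.map .var) m hdvd
      _ = lmbAux (.var h₀) ((rest₀ ++ (List.ofFn f).tail.flatMap U).map .var ++ m) := by
          simp [leaves]

end CTerm

/-- every term is related to its left-most bracketing by the
`n`-Catalan congruence. -/
theorem catRel_lmb (n : ℕ) (hn : 2 ≤ n) (V : Type*) (t : CTerm V n) :
    CatRel V n t (CTerm.lmb t) := by
  obtain ⟨h, rest, hU⟩ := List.exists_cons_of_ne_nil (CTerm.U_ne_nil (by omega) t)
  have hlmb : CTerm.lmb t = CTerm.lmbAux (.var h) (rest.map .var) := by
    rw [CTerm.lmb, hU]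
    rfl
  have h := CTerm.lmbAux_expand_head hn t hU [] (dvd_zero _)
  rwa [CTerm.lmbAux_of_length_lt t (by simp; omega), List.append_nil, ← hlmb] at h
end

section
/- For every term t of the free algebra F_⊗(V) on one n-ary operation, the rank R(t) is zero if and only if t equals its left-most bracketing lmb(t). -/
/-!
Because `∑ i : Fin n, i = n(n-1)/2`, the rank unfolds to
`R (op f) = ∑ i, (R (f i) + i * (L (f i) - 1))`, a sum of nonnegative terms. Hence `R t = 0`
exactly when, in every operation of `t`, all arguments have rank zero and all but the first have
length one, i.e. are variables: `t` is a left comb. Left combs are exactly the fixed points of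
`lmb`: `lmbAux` only ever builds left combs, and on the word of a left comb `⊗(s, v₁, …, vₙ₋₁)` it
first rebrackets the word of `s` (whose length is `1 mod n - 1`) back into `s`, then adds the
variables `vᵢ` in one last step.
-/

theorem Fin.sum_univ_intCast_val (n : ℕ) : ∑ i : Fin n, ((i : ℕ) : ℤ) = n * (n - 1) / 2 := by
  have h := congrArg (fun k : ℕ => (k : ℤ)) (Finset.sum_range_id_mul_two n)
  rcases n with _ | n
  · simp
  · push_cast at h
    rw [Fin.sum_univ_eq_sum_range (fun i => (i : ℤ)), Nat.cast_succ, add_sub_cancel_right, ← h]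
    simp

namespace CTerm

variable {V : Type*} {n : ℕ}

theorem one_le_L (hn : 0 < n) : ∀ t : CTerm V n, 1 ≤ t.L
  | .var _ => le_rfl
  | .op f => (one_le_L hn (f ⟨0, hn⟩)).trans
      (Finset.single_le_sum (fun i _ => Nat.zero_le (L (f i))) (Finset.mem_univ _))

theorem L_eq_one_iff (hn : 2 ≤ n) {t : CTerm V n} : t.L = 1 ↔ ∃ v, t = var v := by
  refine ⟨fun h => ?_, fun ⟨v, h⟩ => h ▸ rfl⟩
  cases t with
  | var v => exact ⟨v, rfl⟩
  | op f =>
    have : n ≤ ∑ i, L (f i) := by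
      simpa using Finset.card_nsmul_le_sum Finset.univ (fun i => L (f i)) 1
        fun i _ => one_le_L (by omega) (f i)
    rw [L] at h
    omega

theorem length_U (t : CTerm V n) : (U t).length = t.L := by
  induction t with
  | var v => rfl
  | op f ih => simp [U, L, List.sum_ofFn, ih]

theorem dvd_L_sub_one (hn : 0 < n) (t : CTerm V n) : n - 1 ∣ t.L - 1 := by
  induction t with
  | var v => simp [L]
  | op f ih =>
    have hL : (op f).L - 1 = ∑ i, (L (f i) - 1) + (n - 1) := by
      have : ∑ i, L (f i) = ∑ i, (L (f i) - 1) + ∑ _i : Fin n, 1 := by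
        rw [← Finset.sum_add_distrib]
        exact Finset.sum_congr rfl fun i _ => (Nat.sub_add_cancel (one_le_L hn (f i))).symm
      simp only [Finset.sum_const, Finset.card_univ, Fintype.card_fin, smul_eq_mul,
        mul_one] at this
      rw [L, this]; omega
    rw [hL]
    exact dvd_add (Finset.dvd_sum fun i _ => ih i) dvd_rfl

theorem R_op (f : Fin n → CTerm V n) :
    R (op f) = ∑ i, (R (f i) + (i : ℕ) * ((L (f i) : ℤ) - 1)) := by
  rw [R, ← Fin.sum_univ_intCast_val]
  simp only [mul_sub, mul_one, Finset.sum_add_distrib, Finset.sum_sub_distrib]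
  ring

theorem val_mul_L_sub_one_nonneg (i : Fin n) (t : CTerm V n) : 0 ≤ (i : ℕ) * ((t.L : ℤ) - 1) :=
  mul_nonneg (Int.natCast_nonneg _) (sub_nonneg.2 (by exact_mod_cast one_le_L i.pos t))

theorem R_nonneg (t : CTerm V n) : 0 ≤ t.R := by
  induction t with
  | var v => rfl
  | op f ih =>
    rw [R_op]
    exact Finset.sum_nonneg fun i _ => add_nonneg (ih i) (val_mul_L_sub_one_nonneg i _)

theorem R_op_eq_zero_iff (f : Fin n → CTerm V n) :
    R (op f) = 0 ↔ ∀ i, R (f i) = 0 ∧ ((i : ℕ) = 0 ∨ L (f i) = 1) := by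
  rw [R_op, Finset.sum_eq_zero_iff_of_nonneg fun i _ =>
    add_nonneg (R_nonneg _) (val_mul_L_sub_one_nonneg i _)]
  refine forall_congr' fun i => ?_
  rw [add_eq_zero_iff_of_nonneg (R_nonneg _) (val_mul_L_sub_one_nonneg i _)]
  simp [sub_eq_zero]

def IsLeftComb : CTerm V n → Prop
  | .var _ => True
  | .op f => ∀ i : Fin n, if (i : ℕ) = 0 then IsLeftComb (f i) else ∃ v, f i = .var v

theorem R_eq_zero_iff_isLeftComb (hn : 2 ≤ n) (t : CTerm V n) : t.R = 0 ↔ IsLeftComb t := by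
  induction t with
  | var v => exact iff_of_true rfl trivial
  | op f ih =>
    rw [R_op_eq_zero_iff, IsLeftComb]
    refine forall_congr' fun i => ?_
    split_ifs with hi
    · simp [hi, ih]
    · simp only [hi, false_or, L_eq_one_iff hn, and_iff_right_iff_imp]
      rintro ⟨v, hv⟩
      rw [hv, R]

theorem isLeftComb_lmbAux {t : CTerm V n} (ht : IsLeftComb t) {l : List (CTerm V n)}
    (hl : ∀ x ∈ l, ∃ v, x = var v) : IsLeftComb (lmbAux t l) := by
  fun_induction lmbAux t l with
  | case1 => exact ht
  | case2 t r rs h ih =>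
    refine ih (fun i => ?_) fun x hx => hl x (List.mem_of_mem_drop hx)
    split_ifs with hi
    · simpa [hi] using ht
    · obtain ⟨j, hj⟩ := Nat.exists_eq_succ_of_ne_zero hi
      have : j < (r :: rs).length := by simp; omega
      dsimp only
      rw [hj, List.getD_cons_succ, List.getD_eq_getElem _ _ this]
      exact hl _ (List.getElem_mem _)
  | case3 => exact ht

theorem lmbAux_append_s7 {t : CTerm V n} {l : List (CTerm V n)} (hl : n - 1 ∣ l.length)
    (l' : List (CTerm V n)) : lmbAux t (l ++ l') = lmbAux (lmbAux t l) l' := by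
  fun_induction lmbAux t l with
  | case1 => rw [List.nil_append]
  | case2 t r rs h ih =>
    have hle : n - 1 ≤ (r :: rs).length := Nat.le_of_dvd (by simp) hl
    have hget : (fun i : Fin n => (t :: r :: (rs ++ l')).getD i t)
        = fun i : Fin n => (t :: r :: rs).getD i t := by
      funext i
      rw [← List.cons_append, ← List.cons_append, List.getD_append _ _ _ _ (by simp; omega)]
    rw [List.cons_append, lmbAux, dif_pos ⟨h.1, by simp; omega⟩, hget, ← List.cons_append,
      List.drop_append_of_le_length hle]
    exact ih (by simpa using Nat.dvd_sub hl dvd_rfl)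
  | case3 t r rs h =>
    have hn : n - 1 ≠ 0 := by rintro h0; simp [h0] at hl
    have : n - 1 ≤ rs.length + 1 := Nat.le_of_dvd (by simp) hl
    omega

theorem lmb_of_U_eq_cons {t : CTerm V n} {v : V} {vs : List V} (h : U t = v :: vs) :
    lmb t = lmbAux (var v) (vs.map var) := by
  simp [lmb, h]

theorem isLeftComb_lmb (hn : 0 < n) (t : CTerm V n) : IsLeftComb (lmb t) := by
  obtain ⟨v, vs, hU⟩ := List.exists_cons_of_ne_nil (U_ne_nil hn t)
  rw [lmb_of_U_eq_cons hU]
  exact isLeftComb_lmbAux (by trivial) (by simp)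

theorem lmbAux_ofFn {m : ℕ} (f : Fin (m + 2) → CTerm V (m + 2)) :
    lmbAux (f 0) (List.ofFn fun j => f j.succ) = op f := by
  obtain ⟨r, rs, hrs⟩ := List.exists_cons_of_ne_nil (l := List.ofFn fun j => f j.succ) (by simp)
  have hlen : m = rs.length := by simpa using congrArg List.length hrs
  rw [hrs, lmbAux, dif_pos (by omega), List.drop_eq_nil_of_le (by simp; omega), lmbAux, ← hrs,
    ← List.ofFn_succ]
  congr 1
  funext i
  rw [List.getD_eq_getElem _ _ (by simp; omega), List.getElem_ofFn]

theorem lmb_eq_of_isLeftComb (hn : 2 ≤ n) {t : CTerm V n} (ht : IsLeftComb t) : lmb t = t := by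
  induction t with
  | var v => simp [lmb, U, lmbAux]
  | op f ih =>
    obtain ⟨m, rfl⟩ : ∃ m, n = m + 2 := ⟨n - 2, by omega⟩
    have h0 : IsLeftComb (f 0) := by simpa using ht 0
    choose w hw using fun j : Fin (m + 1) => by simpa using ht j.succ
    obtain ⟨v, vs, hU0⟩ := List.exists_cons_of_ne_nil (U_ne_nil (by omega) (f 0))
    have hU : U (op f) = v :: (vs ++ List.ofFn w) := by
      have hUw : (fun j => U (f j.succ)) = (fun x => [x]) ∘ w := funext fun j => by rw [hw j]; rfl
      rw [U, List.ofFn_succ, List.flatten_cons, hU0, hUw, ← List.map_ofFn, ← List.flatMap_def,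
        List.flatMap_singleton', List.cons_append]
    have hdvd : m + 2 - 1 ∣ vs.length := by
      simpa [← length_U, hU0] using dvd_L_sub_one (by omega) (f 0)
    rw [lmb_of_U_eq_cons hU, List.map_append, lmbAux_append_s7 (by simpa using hdvd),
      ← lmb_of_U_eq_cons hU0, ih 0 h0, List.map_ofFn,
      show var ∘ w = fun j => f j.succ from funext fun j => (hw j).symm]
    exact lmbAux_ofFn f

theorem lmb_eq_self_iff (hn : 2 ≤ n) {t : CTerm V n} : lmb t = t ↔ IsLeftComb t :=
  ⟨fun h => h ▸ isLeftComb_lmb (by omega) t, lmb_eq_of_isLeftComb hn⟩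

end CTerm

/-- the rank of a term is zero iff the term equals its left-most
bracketing. -/
theorem rank_eq_zero_iff_lmb (n : ℕ) (hn : 2 ≤ n) (V : Type*) (t : CTerm V n) :
    CTerm.R t = 0 ↔ t = CTerm.lmb t := by
  rw [CTerm.R_eq_zero_iff_isLeftComb hn, eq_comm, CTerm.lmb_eq_self_iff hn]
end

section
/- Let T = (V,F,E) be a balanced equational theory and let t, t' ∈ 𝔽_F(V). Then t =_T t' if and only if there exists ρ ∈ Struct(T) such that t lies in the domain of ρ and ρ(t) = t'. -/
/-- The monoid of partial endomaps of a type (composition in diagrammatic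
order: `(f * g) u = g (f u)`). -/
def PEnd (X : Type*) := X →. X

instance (X : Type*) : Monoid (PEnd X) where
  mul f g := PFun.comp g f
  one := PFun.id X
  mul_assoc a b c := (PFun.comp_assoc c b a).symm
  one_mul a := PFun.comp_id a
  mul_one a := PFun.id_comp a

/-- Terms of the absolutely free term algebra over a graded signature `F` on
variables `V`. -/
inductive GTerm (V : Type*) (F : ℕ → Type*) : Type _
  | var : V → GTerm V F
  | app : {k : ℕ} → F k → (Fin k → GTerm V F) → GTerm V F

/-- Addresses: words of pairs `(G, i)` with `G` a `k`-ary symbol, `1 ≤ i ≤ k`. -/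
abbrev GAddr (F : ℕ → Type*) := List (Σ k : ℕ, F k × Fin k)

namespace GTerm

variable {V : Type*} {F : ℕ → Type*}

/-- A substitution, extended to terms. -/
def subst (φ : V → GTerm V F) : GTerm V F → GTerm V F
  | .var v => φ v
  | .app G f => .app G fun i => subst φ (f i)

/-- The support (set of variables) of a term. -/
def vars : GTerm V F → Set V
  | .var v => {v}
  | .app _ f => ⋃ i, vars (f i)

open Classical in
/-- The subterm at a given address, if defined. -/
noncomputable def subAt : GTerm V F → GAddr F → Option (GTerm V F)
  | t, [] => some t
  | .var _, _ :: _ => none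
  | .app (k := k) G f, ⟨k', G', i⟩ :: w =>
    if h : k' = k then
      if (h ▸ G') = G then subAt (f (h ▸ i)) w else none
    else none

open Classical in
/-- Replace the subterm at a given address (identity where undefined). -/
noncomputable def replaceAt : GTerm V F → GAddr F → GTerm V F → GTerm V F
  | t, [], r => r
  | .var v, _ :: _, _ => .var v
  | .app (k := k) G f, ⟨k', G', i⟩ :: w, r =>
    if h : k' = k then
      if (h ▸ G') = G then
        .app G (Function.update f (h ▸ i) (replaceAt (f (h ▸ i)) w r))
      else .app G f
    else .app G f

/-- The partial map `ρ^α_{s,t}`: defined on terms whose subterm at `α` is an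
instance `s^φ` of `s`, where it replaces that subterm by `t^φ`. -/
noncomputable def rho (s t : GTerm V F) (α : GAddr F) : PEnd (GTerm V F) :=
  fun u =>
    ⟨∃ φ : V → GTerm V F, subAt u α = some (subst φ s),
     fun h => replaceAt u α (subst (Classical.choose h) t)⟩

end GTerm

section Theory

variable {V : Type*} {F : ℕ → Type*}

/-- A pair of terms is unifiable if it has a pair of substitutions making both
terms equal. -/
def Unifiable (s t : GTerm V F) : Prop :=
  ∃ φ ψ : V → GTerm V F, GTerm.subst φ s = GTerm.subst ψ t

/-- A term occurs in the theory `E` if it is one side of one of its equations. -/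
def Occurs (E : Set (GTerm V F × GTerm V F)) (s : GTerm V F) : Prop :=
  ∃ t, (s, t) ∈ E ∨ (t, s) ∈ E

/-- An equational theory is composable when any two terms occurring in it are
unifiable. -/
def Composable (E : Set (GTerm V F × GTerm V F)) : Prop :=
  ∀ s, Occurs E s → ∀ t, Occurs E t → Unifiable s t

/-- An equational theory is balanced if both sides of each equation have the
same support. -/
def BalancedTheory (E : Set (GTerm V F × GTerm V F)) : Prop :=
  ∀ p ∈ E, GTerm.vars p.1 = GTerm.vars p.2

/-- The generators `ρ^α_{s,t}` of the structure monoid. -/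
noncomputable def structGens (E : Set (GTerm V F × GTerm V F)) :
    Set (PEnd (GTerm V F)) :=
  {p | ∃ (s t : GTerm V F) (α : GAddr F),
    ((s, t) ∈ E ∨ (t, s) ∈ E) ∧ p = GTerm.rho s t α}

/-- The structure monoid `Struct(T)` of the equational theory `T = (V,F,E)`. -/
noncomputable def StructM (E : Set (GTerm V F × GTerm V F)) :
    Submonoid (PEnd (GTerm V F)) :=
  Submonoid.closure (structGens E)

/-- The congruence `=_T` generated by the equational theory. -/
inductive EqTheory (E : Set (GTerm V F × GTerm V F)) : GTerm V F → GTerm V F → Prop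
  | base {s t : GTerm V F} (h : (s, t) ∈ E) (φ : V → GTerm V F) :
      EqTheory E (GTerm.subst φ s) (GTerm.subst φ t)
  | refl (t) : EqTheory E t t
  | symm {t t'} : EqTheory E t t' → EqTheory E t' t
  | trans {t t' t''} : EqTheory E t t' → EqTheory E t' t'' → EqTheory E t t''
  | compat {k : ℕ} (G : F k) {f g : Fin k → GTerm V F} :
      (∀ i, EqTheory E (f i) (g i)) → EqTheory E (.app G f) (.app G g)

/-- The smallest monoid congruence relating every idempotent to `1`; the
quotient by it is the universal group of the (inverse) monoid. -/
def idemCon (M : Type*) [Monoid M] : Con M :=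
  conGen fun a b => a * a = a ∧ b = 1

/-- The universal group of a monoid: the quotient collapsing all idempotents. -/
def UnivGroup (M : Type*) [Monoid M] : Type _ := (idemCon M).Quotient

noncomputable instance (M : Type*) [Monoid M] : Monoid (UnivGroup M) :=
  inferInstanceAs (Monoid (idemCon M).Quotient)

end Theory

/-!
A generator `ρ^α_{s,t}` performs one rewrite `s^φ ↦ t^φ` at address `α`, and composing partial
maps chains such rewrites, so the terms reachable from `t` under `Struct(T)` are exactly those
reachable by a finite sequence of rewrites. This relation is reflexive and transitive, contains the
instances of `E` and is compatible with the symbols, since rewriting at `α` inside the `i`-th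
argument of `G` is rewriting at `(G, i) · α`. Balancedness gives symmetry: the instance `s^φ`
determines `φ` on `supp s = supp t`, so `ρ^α_{t,s}` undoes `ρ^α_{s,t}`. Conversely every rewrite
is an instance of `=_T` placed in a context.
-/

open Relation

namespace PEnd

variable {X : Type*}

theorem mem_one_iff {u u' : X} : u' ∈ (1 : PEnd X) u ↔ u' = u :=
  Part.mem_some_iff

theorem mem_mul_iff {f g : PEnd X} {u u' : X} :
    u' ∈ (f * g) u ↔ ∃ w, w ∈ f u ∧ u' ∈ g w :=
  Part.mem_bind_iff

theorem exists_mem_closure_iff_reflTransGen {S : Set (PEnd X)} {u u' : X} :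
    (∃ ρ ∈ Submonoid.closure S, u' ∈ ρ u) ↔ ReflTransGen (fun a b => ∃ ρ ∈ S, b ∈ ρ a) u u' := by
  constructor
  · rintro ⟨ρ, hρ, h⟩
    induction hρ using Submonoid.closure_induction generalizing u u' with
    | mem ρ hρ => exact .single ⟨ρ, hρ, h⟩
    | one => rw [mem_one_iff.mp h]
    | mul ρ₁ ρ₂ _ _ ih₁ ih₂ =>
      obtain ⟨w, hw, hw'⟩ := mem_mul_iff.mp h
      exact (ih₁ hw).trans (ih₂ hw')
  · intro h
    induction h with
    | refl => exact ⟨1, one_mem _, mem_one_iff.mpr rfl⟩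
    | tail _ hstep ih =>
      obtain ⟨ρ, hρ, hm⟩ := ih
      obtain ⟨σ, hσ, hm'⟩ := hstep
      exact ⟨ρ * σ, mul_mem hρ (Submonoid.subset_closure hσ), mem_mul_iff.mpr ⟨_, hm, hm'⟩⟩

end PEnd

namespace GTerm

variable {V : Type*} {F : ℕ → Type*}

theorem subst_eq_subst_iff {s : GTerm V F} {φ ψ : V → GTerm V F} :
    subst φ s = subst ψ s ↔ Set.EqOn φ ψ (vars s) := by
  induction s with
  | var v => simp [subst, vars]
  | app G f ih =>
    simp only [subst, vars, app.injEq, heq_eq_eq, true_and, funext_iff, ih]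
    simp only [Set.EqOn, Set.mem_iUnion, forall_exists_index]
    exact forall_comm

theorem subAt_nil (u : GTerm V F) : subAt u [] = some u := by
  rw [subAt]

theorem replaceAt_nil (u r : GTerm V F) : replaceAt u [] r = r := by
  rw [replaceAt]

theorem subAt_cons {k : ℕ} (G : F k) (f : Fin k → GTerm V F) (i : Fin k) (α : GAddr F) :
    subAt (app G f) (⟨k, G, i⟩ :: α) = subAt (f i) α := by
  rw [subAt, dif_pos rfl, if_pos rfl]

theorem replaceAt_cons {k : ℕ} (G : F k) (f : Fin k → GTerm V F) (i : Fin k) (α : GAddr F)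
    (r : GTerm V F) :
    replaceAt (app G f) (⟨k, G, i⟩ :: α) r = app G (Function.update f i (replaceAt (f i) α r)) := by
  rw [replaceAt, dif_pos rfl, if_pos rfl]

theorem exists_eq_app_of_subAt_cons_eq_some {u x : GTerm V F} {k : ℕ} {G : F k} {i : Fin k}
    {α : GAddr F} (h : subAt u (⟨k, G, i⟩ :: α) = some x) :
    ∃ f : Fin k → GTerm V F, u = app G f ∧ subAt (f i) α = some x := by
  cases u with
  | var v => simp [subAt] at h
  | @app k' G' f =>
    rw [subAt] at h
    split_ifs at h with hk hG
    subst hk hG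
    exact ⟨f, rfl, h⟩

theorem replaceAt_of_subAt_eq_some {α : GAddr F} {u x : GTerm V F} (h : subAt u α = some x) :
    replaceAt u α x = u := by
  induction α generalizing u with
  | nil => rw [subAt_nil, Option.some_inj] at h; rw [replaceAt_nil, h]
  | cons a α ih =>
    obtain ⟨k, G, i⟩ := a
    obtain ⟨f, rfl, hf⟩ := exists_eq_app_of_subAt_cons_eq_some h
    rw [replaceAt_cons, ih hf, Function.update_eq_self]

theorem subAt_replaceAt {α : GAddr F} {u x : GTerm V F} (h : subAt u α = some x)
    (r : GTerm V F) : subAt (replaceAt u α r) α = some r := by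
  induction α generalizing u with
  | nil => rw [replaceAt_nil, subAt_nil]
  | cons a α ih =>
    obtain ⟨k, G, i⟩ := a
    obtain ⟨f, rfl, hf⟩ := exists_eq_app_of_subAt_cons_eq_some h
    rw [replaceAt_cons, subAt_cons, Function.update_self, ih hf]

theorem replaceAt_replaceAt {α : GAddr F} {u x : GTerm V F} (h : subAt u α = some x)
    (r r' : GTerm V F) : replaceAt (replaceAt u α r) α r' = replaceAt u α r' := by
  induction α generalizing u with
  | nil => rw [replaceAt_nil, replaceAt_nil]
  | cons a α ih =>
    obtain ⟨k, G, i⟩ := a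
    obtain ⟨f, rfl, hf⟩ := exists_eq_app_of_subAt_cons_eq_some h
    rw [replaceAt_cons, replaceAt_cons, replaceAt_cons, Function.update_self, ih hf,
      Function.update_idem]

/-- `rho` picks some matching substitution; `vars t ⊆ vars s` makes its image independent of
that choice. -/
theorem mem_rho_iff {s t : GTerm V F} (hts : vars t ⊆ vars s) {α : GAddr F} {u u' : GTerm V F} :
    u' ∈ rho s t α u ↔
      ∃ φ : V → GTerm V F, subAt u α = some (subst φ s) ∧ u' = replaceAt u α (subst φ t) := by
  rw [rho, Part.mem_mk_iff]
  constructor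
  · rintro ⟨hdom, rfl⟩
    exact ⟨_, Classical.choose_spec hdom, rfl⟩
  · rintro ⟨φ, hφ, rfl⟩
    have hdom : ∃ ψ, subAt u α = some (subst ψ s) := ⟨φ, hφ⟩
    have hs : subst (Classical.choose hdom) s = subst φ s :=
      Option.some_injective _ ((Classical.choose_spec hdom).symm.trans hφ)
    refine ⟨hdom, ?_⟩
    rw [subst_eq_subst_iff.mpr ((subst_eq_subst_iff.mp hs).mono hts)]

theorem mem_rho_swap {s t : GTerm V F} (hst : vars s = vars t) {α : GAddr F} {u u' : GTerm V F}
    (h : u' ∈ rho s t α u) : u ∈ rho t s α u' := by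
  obtain ⟨φ, hφ, rfl⟩ := (mem_rho_iff hst.ge).mp h
  refine (mem_rho_iff hst.le).mpr ⟨φ, subAt_replaceAt hφ _, ?_⟩
  rw [replaceAt_replaceAt hφ, replaceAt_of_subAt_eq_some hφ]

theorem rho_cons_app (s t : GTerm V F) {k : ℕ} (G : F k) (i : Fin k) (α : GAddr F)
    (f : Fin k → GTerm V F) :
    rho s t (⟨k, G, i⟩ :: α) (app G f)
      = (rho s t α (f i)).map (app G <| Function.update f i ·) := by
  refine Part.ext' (by simp only [rho, subAt_cons, Part.map]) fun _ _ => ?_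
  simp only [rho, replaceAt_cons]
  congr
  funext φ
  rw [subAt_cons]

end GTerm

section Rewriting

open GTerm

variable {V : Type*} {F : ℕ → Type*} {E : Set (GTerm V F × GTerm V F)}

def RewriteStep (E : Set (GTerm V F × GTerm V F)) (u u' : GTerm V F) : Prop :=
  ∃ ρ ∈ structGens E, u' ∈ ρ u

theorem BalancedTheory.vars_eq (hbal : BalancedTheory E) {s t : GTerm V F}
    (h : (s, t) ∈ E ∨ (t, s) ∈ E) : vars s = vars t :=
  h.elim (hbal _) fun h => (hbal _ h).symm

theorem RewriteStep.symm (hbal : BalancedTheory E) {u u' : GTerm V F}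
    (h : RewriteStep E u u') : RewriteStep E u' u := by
  obtain ⟨_, ⟨s, t, α, hst, rfl⟩, h⟩ := h
  exact ⟨rho t s α, ⟨t, s, α, hst.symm, rfl⟩, mem_rho_swap (hbal.vars_eq hst) h⟩

theorem RewriteStep.app {k : ℕ} (G : F k) {f : Fin k → GTerm V F} {i : Fin k} {u' : GTerm V F}
    (h : RewriteStep E (f i) u') :
    RewriteStep E (.app G f) (.app G (Function.update f i u')) := by
  obtain ⟨_, ⟨s, t, α, hst, rfl⟩, h⟩ := h
  refine ⟨rho s t (⟨k, G, i⟩ :: α), ⟨s, t, _, hst, rfl⟩, ?_⟩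
  rw [rho_cons_app]
  exact Part.mem_map _ h

theorem reflTransGen_rewriteStep_app {k : ℕ} (G : F k) {f g : Fin k → GTerm V F}
    (h : ∀ i, ReflTransGen (RewriteStep E) (f i) (g i)) :
    ReflTransGen (RewriteStep E) (.app G f) (.app G g) := by
  classical
  -- rewrite the arguments one at a time
  suffices ∀ S : Finset (Fin k),
      ReflTransGen (RewriteStep E) (.app G f) (.app G (S.piecewise g f)) by
    simpa using this Finset.univ
  intro S
  induction S using Finset.induction_on with
  | empty => rw [Finset.piecewise_empty]
  | @insert i S hi ih =>
    set P := S.piecewise g f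
    have hP : Function.update P i (f i) = P :=
      Function.update_eq_self_iff.mpr (Finset.piecewise_eq_of_notMem _ _ _ hi).symm
    rw [Finset.piecewise_insert]
    refine ih.trans ?_
    rw [← hP]
    refine ReflTransGen.lift (fun u => GTerm.app G (Function.update P i u)) (fun u u' hu => ?_)
      _ _ (h i)
    simpa using RewriteStep.app G (f := Function.update P i u) (i := i) (by simpa using hu)

theorem eqTheory_replaceAt {α : GAddr F} {u x y : GTerm V F} (hx : subAt u α = some x)
    (h : EqTheory E x y) : EqTheory E u (replaceAt u α y) := by
  induction α generalizing u with
  | nil =>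
    rw [subAt_nil, Option.some_inj] at hx
    rwa [replaceAt_nil, hx]
  | cons a α ih =>
    obtain ⟨k, G, i⟩ := a
    obtain ⟨f, rfl, hf⟩ := exists_eq_app_of_subAt_cons_eq_some hx
    rw [replaceAt_cons]
    refine EqTheory.compat G fun j => ?_
    rcases eq_or_ne j i with rfl | hj
    · rw [Function.update_self]
      exact ih hf
    · rw [Function.update_of_ne hj]
      exact .refl _

theorem EqTheory.of_rewriteStep (hbal : BalancedTheory E) {u u' : GTerm V F}
    (h : RewriteStep E u u') : EqTheory E u u' := by
  obtain ⟨_, ⟨s, t, α, hst, rfl⟩, h⟩ := h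
  obtain ⟨φ, hφ, rfl⟩ := (mem_rho_iff (hbal.vars_eq hst).ge).mp h
  exact eqTheory_replaceAt hφ (hst.elim (.base · φ) fun h => .symm (.base h φ))

theorem EqTheory.reflTransGen_rewriteStep (hbal : BalancedTheory E) {u u' : GTerm V F}
    (h : EqTheory E u u') : ReflTransGen (RewriteStep E) u u' := by
  induction h with
  | @base s t hst φ =>
    refine .single ⟨rho s t [], ⟨s, t, [], .inl hst, rfl⟩, ?_⟩
    simpa only [replaceAt_nil] using
      (mem_rho_iff (hbal _ hst).ge).mpr ⟨φ, subAt_nil _, rfl⟩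
  | refl => exact .refl
  | symm _ ih =>
    have : Std.Symm (RewriteStep E) := ⟨fun _ _ => RewriteStep.symm hbal⟩
    exact Std.Symm.symm _ _ ih
  | trans _ _ ih₁ ih₂ => exact ih₁.trans ih₂
  | compat G _ ih => exact reflTransGen_rewriteStep_app G ih

end Rewriting

/-- for a balanced equational theory `T`, two terms are related
by `=_T` iff some element of the structure monoid (a partial map) sends one to
the other. -/
theorem eqTheory_iff_structM (V : Type*) (F : ℕ → Type*)
    (E : Set (GTerm V F × GTerm V F)) (hbal : BalancedTheory E)
    (t t' : GTerm V F) :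
    EqTheory E t t' ↔ ∃ ρ ∈ StructM E, t' ∈ (ρ : PEnd (GTerm V F)) t := by
  rw [StructM, PEnd.exists_mem_closure_iff_reflTransGen]
  refine ⟨EqTheory.reflTransGen_rewriteStep hbal, fun h => ?_⟩
  induction h with
  | refl => exact .refl _
  | tail _ hstep ih => exact ih.trans (.of_rewriteStep hbal hstep)
end

section
/- Let V be an infinite set of variables and let the signature F consist of precisely one function symbol. Then any two linear terms of 𝔽_F(V) are unifiable; consequently every linear equational theory (V,F,E) over a single function symbol is composable. -/
open Classical in
/-- The number of occurrences of a variable in a term. -/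
noncomputable def countOcc {V : Type*} {F : ℕ → Type*} (v : V) :
    GTerm V F → ℕ
  | .var w => if w = v then 1 else 0
  | .app _ f => ∑ i, countOcc v (f i)

/-- A term is linear if no variable occurs in it more than once. -/
def LinearTerm {V : Type*} {F : ℕ → Type*} (t : GTerm V F) : Prop :=
  ∀ v : V, countOcc v t ≤ 1

/-- An equation is linear if both sides are linear with equal supports. -/
def LinearEq {V : Type*} {F : ℕ → Type*} (p : GTerm V F × GTerm V F) : Prop :=
  LinearTerm p.1 ∧ LinearTerm p.2 ∧ GTerm.vars p.1 = GTerm.vars p.2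

namespace GTerm

variable {V : Type*} {F : ℕ → Type*}

theorem subst_congr {φ ψ : V → GTerm V F} :
    ∀ {t : GTerm V F}, (∀ v ∈ vars t, φ v = ψ v) → subst φ t = subst ψ t
  | .var v, h => h v rfl
  | .app G _, h => congrArg (app G) <| funext fun i =>
      subst_congr fun v hv => h v (Set.mem_iUnion.2 ⟨i, hv⟩)

theorem countOcc_app (v : V) {k : ℕ} (G : F k) (f : Fin k → GTerm V F) :
    countOcc v (app G f) = ∑ i, countOcc v (f i) := by
  simp [countOcc]

theorem countOcc_le_countOcc_app (v : V) {k : ℕ} (G : F k) (f : Fin k → GTerm V F)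
    (i : Fin k) : countOcc v (f i) ≤ countOcc v (app G f) :=
  countOcc_app v G f ▸ Finset.single_le_sum (f := fun j => countOcc v (f j))
    (fun _ _ => Nat.zero_le _) (Finset.mem_univ i)

theorem one_le_countOcc_of_mem_vars :
    ∀ {t : GTerm V F} {v : V}, v ∈ vars t → 1 ≤ countOcc v t
  | .var w, v, h => by
      obtain rfl : v = w := h
      simp [countOcc]
  | .app G f, v, h => by
      obtain ⟨i, hi⟩ := Set.mem_iUnion.1 h
      exact (one_le_countOcc_of_mem_vars hi).trans (countOcc_le_countOcc_app v G f i)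

end GTerm

namespace LinearTerm

open GTerm

variable {V : Type*} {F : ℕ → Type*} {k : ℕ} {G : F k} {f : Fin k → GTerm V F}

theorem of_app (h : LinearTerm (app G f)) (i : Fin k) : LinearTerm (f i) := fun v =>
  (countOcc_le_countOcc_app v G f i).trans (h v)

theorem eq_of_mem_vars_of_app (h : LinearTerm (app G f)) {v : V} {i j : Fin k}
    (hi : v ∈ vars (f i)) (hj : v ∈ vars (f j)) : i = j := by
  by_contra hne
  have hpair : countOcc v (f i) + countOcc v (f j) ≤ countOcc v (app G f) := by
    rw [countOcc_app, ← Finset.sum_pair (f := fun l => countOcc v (f l)) hne]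
    exact Finset.sum_le_sum_of_subset (Finset.subset_univ _)
  have := h v
  have := one_le_countOcc_of_mem_vars hi
  have := one_le_countOcc_of_mem_vars hj
  omega

theorem exists_subst_of_app (h : LinearTerm (app G f)) (φ : Fin k → V → GTerm V F) :
    ∃ ψ : V → GTerm V F, ∀ i, subst ψ (f i) = subst (φ i) (f i) := by
  classical
  refine ⟨fun v => if hv : ∃ i, v ∈ vars (f i) then φ hv.choose v else var v,
    fun i => subst_congr fun v hv => ?_⟩
  have hex : ∃ j, v ∈ vars (f j) := ⟨i, hv⟩
  rw [dif_pos hex, h.eq_of_mem_vars_of_app hex.choose_spec hv]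

theorem unifiable [Subsingleton (Σ k, F k)] :
    ∀ {t₁ t₂ : GTerm V F}, LinearTerm t₁ → LinearTerm t₂ → Unifiable t₁ t₂
  | .var _, t₂, _, _ => ⟨fun _ => subst var t₂, var, rfl⟩
  | .app G f, .var _, _, _ => ⟨var, fun _ => subst var (app G f), rfl⟩
  | .app (k := k) G f, .app (k := k') G' g, h₁, h₂ => by
      obtain ⟨rfl, hG⟩ := Sigma.mk.inj_iff.mp (Subsingleton.elim (⟨k, G⟩ : Σ k, F k) ⟨k', G'⟩)
      obtain rfl := eq_of_heq hG
      choose φ ψ hφψ using fun i => unifiable (h₁.of_app i) (h₂.of_app i)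
      obtain ⟨φ', hφ'⟩ := h₁.exists_subst_of_app φ
      obtain ⟨ψ', hψ'⟩ := h₂.exists_subst_of_app ψ
      exact ⟨φ', ψ', congrArg (app G) <| funext fun i => by
        simp only [hφ', hψ', hφψ]⟩

theorem of_occurs {E : Set (GTerm V F × GTerm V F)} (hE : ∀ p ∈ E, LinearEq p)
    {s : GTerm V F} : Occurs E s → LinearTerm s
  | ⟨_, .inl h⟩ => (hE _ h).1
  | ⟨_, .inr h⟩ => (hE _ h).2.1

end LinearTerm

theorem linear_unifiable_and_composable_general (V : Type*) (F : ℕ → Type*)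
    (k₀ : ℕ) (G₀ : F k₀)
    (huniq : ∀ (k : ℕ) (G : F k), (⟨k, G⟩ : Σ k, F k) = ⟨k₀, G₀⟩) :
    (∀ t₁ t₂ : GTerm V F, LinearTerm t₁ → LinearTerm t₂ → Unifiable t₁ t₂) ∧
      (∀ E : Set (GTerm V F × GTerm V F), (∀ p ∈ E, LinearEq p) →
        Composable E) := by
  have : Subsingleton (Σ k, F k) := ⟨fun a b => (huniq _ a.2).trans (huniq _ b.2).symm⟩
  exact ⟨fun _ _ => LinearTerm.unifiable, fun _ hE _ hs _ ht =>
    (LinearTerm.of_occurs hE hs).unifiable (LinearTerm.of_occurs hE ht)⟩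

/-- over an infinite variable set and a signature with precisely
one function symbol, any two linear terms are unifiable; consequently, every
linear equational theory over such a signature is composable. -/
theorem linear_unifiable_and_composable (V : Type*) (F : ℕ → Type*)
    [Infinite V] (k₀ : ℕ) (G₀ : F k₀)
    (huniq : ∀ (k : ℕ) (G : F k), (⟨k, G⟩ : Σ k, F k) = ⟨k₀, G₀⟩) :
    (∀ t₁ t₂ : GTerm V F, LinearTerm t₁ → LinearTerm t₂ → Unifiable t₁ t₂) ∧
      (∀ E : Set (GTerm V F × GTerm V F), (∀ p ∈ E, LinearEq p) →
        Composable E) :=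
  linear_unifiable_and_composable_general V F k₀ G₀ huniq
end

section
/- Let T̂ be the precategorification of a balanced equational theory T = (V,F,E). Every morphism of the free category 𝔽_{T̂}(V̂) is an identity or a composite of finitely many singular morphisms. -/
section FreeCategory

variable {V : Type*} {F : ℕ → Type*}

/-- Morphism expressions of the free category `𝔽_{T̂}(V̂)` on the
precategorification of the equational theory `(V,F,E)`. -/
inductive PreMor (V : Type*) (F : ℕ → Type*) (E : Set (GTerm V F × GTerm V F)) :
    GTerm V F → GTerm V F → Type _
  | id (t : GTerm V F) : PreMor V F E t t
  | gen (s t : GTerm V F) (h : (s, t) ∈ E ∨ (t, s) ∈ E) (φ : V → GTerm V F) :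
      PreMor V F E (GTerm.subst φ s) (GTerm.subst φ t)
  | app {k : ℕ} (G : F k) {s t : Fin k → GTerm V F}
      (f : ∀ i, PreMor V F E (s i) (t i)) :
      PreMor V F E (.app G s) (.app G t)
  | comp {a b c : GTerm V F} :
      PreMor V F E a b → PreMor V F E b c → PreMor V F E a c

variable {E : Set (GTerm V F × GTerm V F)}

/-- Transport a morphism along equalities of its endpoints. -/
def PreMor.recast {a a' b b' : GTerm V F} (h1 : a = a') (h2 : b = b')
    (f : PreMor V F E a b) : PreMor V F E a' b' := h1 ▸ h2 ▸ f

/-- The morphism `u(h) : u^φ → u^ψ` induced by a family of morphisms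
`h_x : φ(x) → ψ(x)`. -/
def termMor (φ ψ : V → GTerm V F) (h : ∀ x, PreMor V F E (φ x) (ψ x)) :
    (u : GTerm V F) → PreMor V F E (GTerm.subst φ u) (GTerm.subst ψ u)
  | .var x => h x
  | .app G f => .app G fun i => termMor φ ψ h (f i)

/-- Whiskering `G(1,…,1,f,1,…,1)` with `f` in the `i`-th argument. -/
def gwhisk {k : ℕ} (G : F k) (g : Fin k → GTerm V F) (i : Fin k)
    {a b : GTerm V F} (f : PreMor V F E a b) :
    PreMor V F E (.app G (Function.update g i a)) (.app G (Function.update g i b)) :=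
  PreMor.app G fun j =>
    if h : j = i then
      PreMor.recast (by rw [h, Function.update_self]) (by rw [h, Function.update_self]) f
    else
      PreMor.recast (by rw [Function.update_of_ne h]) (by rw [Function.update_of_ne h])
        (PreMor.id (g j))

/-- The congruence making `𝔽_{T̂}(V̂)` a category with functorial symbols and
natural, invertible generators. -/
inductive MorEq (V : Type*) (F : ℕ → Type*) (E : Set (GTerm V F × GTerm V F)) :
    {a b : GTerm V F} → PreMor V F E a b → PreMor V F E a b → Prop
  | refl {a b} (f : PreMor V F E a b) : MorEq V F E f f
  | symm {a b} {f g : PreMor V F E a b} : MorEq V F E f g → MorEq V F E g f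
  | trans {a b} {f g h : PreMor V F E a b} :
      MorEq V F E f g → MorEq V F E g h → MorEq V F E f h
  | compCongr {a b c} {f f' : PreMor V F E a b} {g g' : PreMor V F E b c} :
      MorEq V F E f f' → MorEq V F E g g' → MorEq V F E (f.comp g) (f'.comp g')
  | appCongr {k : ℕ} (G : F k) {s t : Fin k → GTerm V F}
      {f g : ∀ i, PreMor V F E (s i) (t i)} :
      (∀ i, MorEq V F E (f i) (g i)) → MorEq V F E (.app G f) (.app G g)
  | idComp {a b} (f : PreMor V F E a b) : MorEq V F E ((PreMor.id a).comp f) f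
  | compId {a b} (f : PreMor V F E a b) : MorEq V F E (f.comp (PreMor.id b)) f
  | assoc {a b c d} (f : PreMor V F E a b) (g : PreMor V F E b c)
      (h : PreMor V F E c d) :
      MorEq V F E ((f.comp g).comp h) (f.comp (g.comp h))
  | funcId {k : ℕ} (G : F k) (s : Fin k → GTerm V F) :
      MorEq V F E (PreMor.app G fun i => PreMor.id (s i)) (PreMor.id (.app G s))
  | funcComp {k : ℕ} (G : F k) {s t u : Fin k → GTerm V F}
      (f : ∀ i, PreMor V F E (s i) (t i)) (g : ∀ i, PreMor V F E (t i) (u i)) :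
      MorEq V F E ((PreMor.app G f).comp (PreMor.app G g))
        (PreMor.app G fun i => (f i).comp (g i))
  | invRight (s t : GTerm V F) (h : (s, t) ∈ E ∨ (t, s) ∈ E) (φ : V → GTerm V F) :
      MorEq V F E ((PreMor.gen s t h φ).comp (PreMor.gen t s (Or.symm h) φ))
        (PreMor.id _)
  | natural (s t : GTerm V F) (h : (s, t) ∈ E ∨ (t, s) ∈ E)
      (φ ψ : V → GTerm V F) (hm : ∀ x, PreMor V F E (φ x) (ψ x)) :
      MorEq V F E ((termMor φ ψ hm s).comp (PreMor.gen s t h ψ))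
        ((PreMor.gen s t h φ).comp (termMor φ ψ hm t))

/-- Singular morphisms: a generator instance, whiskered finitely many times. -/
inductive Singular : {a b : GTerm V F} → PreMor V F E a b → Prop
  | gen (s t : GTerm V F) (h : (s, t) ∈ E ∨ (t, s) ∈ E) (φ : V → GTerm V F) :
      Singular (PreMor.gen s t h φ)
  | whisker {k : ℕ} (G : F k) {s t : Fin k → GTerm V F}
      (f : ∀ i, PreMor V F E (s i) (t i)) (i : Fin k) :
      Singular (f i) →
      (∀ j, j ≠ i → ∃ e : s j = t j, HEq (f j) (PreMor.id (E := E) (s j))) →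
      Singular (PreMor.app G f)

/-- Finite composites of singular morphisms. -/
inductive SingComp : {a b : GTerm V F} → PreMor V F E a b → Prop
  | single {a b} {f : PreMor V F E a b} : Singular f → SingComp f
  | comp {a b c} {f : PreMor V F E a b} {g : PreMor V F E b c} :
      SingComp f → SingComp g → SingComp (f.comp g)

/-- Being (syntactically) an identity morphism. -/
inductive IsId : {a b : GTerm V F} → PreMor V F E a b → Prop
  | mk (t : GTerm V F) : IsId (PreMor.id (E := E) t)

end FreeCategory

/-! By functoriality of `G`, the morphism `G(f₁,…,f_k)` is the composite of the whiskerings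
`G(1,…,fᵢ,…,1)`, and a whiskering of a composite is the composite of the whiskerings. Hence,
by induction on morphism expressions, every morphism is equal to an identity or to a composite
of whiskered generators, i.e. of singular morphisms. -/

section Decomposition

variable {V : Type*} {F : ℕ → Type*} {E : Set (GTerm V F × GTerm V F)}

def Decomposable {a b : GTerm V F} (f : PreMor V F E a b) : Prop :=
  ∃ g : PreMor V F E a b, MorEq V F E f g ∧ (IsId g ∨ SingComp g)

lemma PreMor.recast_heq {a a' b b' : GTerm V F} (h₁ : a = a') (h₂ : b = b')
    (f : PreMor V F E a b) : HEq (f.recast h₁ h₂) f := by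
  subst h₁ h₂; rfl

lemma IsId.recast {a a' b b' : GTerm V F} {f : PreMor V F E a b} (h₁ : a = a') (h₂ : b = b')
    (hf : IsId f) : IsId (f.recast h₁ h₂) := by
  cases hf; subst h₁ h₂; exact .mk _

lemma SingComp.recast {a a' b b' : GTerm V F} {f : PreMor V F E a b} (h₁ : a = a')
    (h₂ : b = b') (hf : SingComp f) : SingComp (f.recast h₁ h₂) := by
  subst h₁ h₂; exact hf

lemma IsId.exists_heq_id {a b : GTerm V F} {f : PreMor V F E a b} (hf : IsId f) :
    ∃ _ : a = b, HEq f (PreMor.id (E := E) a) := by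
  cases hf; exact ⟨rfl, .rfl⟩

lemma MorEq.comp_recast {a b b' c : GTerm V F} (e : b = b') (p : PreMor V F E a b)
    (q : PreMor V F E b c) :
    MorEq V F E (p.comp q) ((p.recast rfl e).comp (q.recast e rfl)) := by
  subst e; exact .refl _

lemma Decomposable.of_morEq {a b : GTerm V F} {f g : PreMor V F E a b}
    (hfg : MorEq V F E f g) : Decomposable g → Decomposable f
  | ⟨h, hgh, hh⟩ => ⟨h, hfg.trans hgh, hh⟩

lemma Decomposable.comp {a b c : GTerm V F} {f : PreMor V F E a b} {g : PreMor V F E b c} :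
    Decomposable f → Decomposable g → Decomposable (f.comp g) := by
  rintro ⟨f', hf, hf'⟩ ⟨g', hg, hg'⟩
  rcases hf' with hf' | hf'
  · cases hf'
    exact ⟨_, (hf.compCongr hg).trans (.idComp _), hg'⟩
  rcases hg' with hg' | hg'
  · cases hg'
    exact ⟨_, (hf.compCongr hg).trans (.compId _), .inr hf'⟩
  · exact ⟨_, hf.compCongr hg, .inr (hf'.comp hg')⟩

lemma exists_app_morEq_comp_update {k : ℕ} (G : F k) {s t : Fin k → GTerm V F}
    (g : ∀ j, PreMor V F E (s j) (t j)) (i : Fin k) {c : GTerm V F}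
    (p : PreMor V F E (s i) c) (q : PreMor V F E c (t i))
    (hpq : MorEq V F E (g i) (p.comp q)) :
    ∃ (g₁ : ∀ j, PreMor V F E (s j) (Function.update t i c j))
      (g₂ : ∀ j, PreMor V F E (Function.update t i c j) (t j)),
      MorEq V F E (.app G g) ((PreMor.app G g₁).comp (.app G g₂)) ∧
      g₁ i = p.recast rfl (Function.update_self i c t).symm ∧
      g₂ i = q.recast (Function.update_self i c t).symm rfl ∧
      ∀ j (hj : j ≠ i), g₁ j = (g j).recast rfl (Function.update_of_ne hj c t).symm ∧
        g₂ j = (PreMor.id (t j)).recast (Function.update_of_ne hj c t).symm rfl := by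
  refine ⟨fun j => if hj : j = i then p.recast (by rw [hj]) (by rw [hj, Function.update_self])
      else (g j).recast rfl (Function.update_of_ne hj c t).symm,
    fun j => if hj : j = i then q.recast (by rw [hj, Function.update_self]) (by rw [hj])
      else (PreMor.id (t j)).recast (Function.update_of_ne hj c t).symm rfl,
    (MorEq.appCongr G fun j => ?_).trans (MorEq.funcComp G _ _).symm,
    dif_pos rfl, dif_pos rfl, fun j hj => ⟨dif_neg hj, dif_neg hj⟩⟩
  by_cases hj : j = i
  · subst hj
    simp only [dif_pos]
    exact hpq.trans (.comp_recast _ p q)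
  · simp only [dif_neg hj]
    exact (MorEq.compId (g j)).symm.trans (.comp_recast _ _ _)

lemma SingComp.whisker {a b : GTerm V F} {p : PreMor V F E a b} (hp : SingComp p) {k : ℕ}
    (G : F k) {s t : Fin k → GTerm V F} (g : ∀ j, PreMor V F E (s j) (t j)) (i : Fin k)
    (hs : s i = a) (ht : t i = b) (hgi : HEq (g i) p) (hid : ∀ j, j ≠ i → IsId (g j)) :
    ∃ h, MorEq V F E (.app G g) h ∧ SingComp h := by
  induction hp generalizing k s t with
  | single hp =>
    subst hs ht
    cases eq_of_heq hgi
    exact ⟨_, .refl _, .single (.whisker G g i hp fun j hj => (hid j hj).exists_heq_id)⟩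
  | comp _ _ ihp ihq =>
    subst hs ht
    obtain ⟨g₁, g₂, hg, hg₁i, hg₂i, hg_ne⟩ :=
      exists_app_morEq_comp_update G g i _ _ (by rw [eq_of_heq hgi]; exact .refl _)
    obtain ⟨h₁, e₁, hh₁⟩ := ihp G g₁ i rfl (Function.update_self ..)
      (hg₁i ▸ PreMor.recast_heq _ _ _) fun j hj => (hg_ne j hj).1 ▸ (hid j hj).recast _ _
    obtain ⟨h₂, e₂, hh₂⟩ := ihq G g₂ i (Function.update_self ..) rfl
      (hg₂i ▸ PreMor.recast_heq _ _ _) fun j hj => (hg_ne j hj).2 ▸ (IsId.mk _).recast _ _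
    exact ⟨_, hg.trans (e₁.compCongr e₂), hh₁.comp hh₂⟩

lemma decomposable_app_of_forall_isId {k : ℕ} (G : F k) {s t : Fin k → GTerm V F}
    (g : ∀ j, PreMor V F E (s j) (t j)) (hg : ∀ j, IsId (g j)) :
    Decomposable (.app G g) := by
  obtain rfl : s = t := funext fun j => (hg j).exists_heq_id.1
  obtain rfl : g = fun j => .id (s j) := funext fun j => eq_of_heq (hg j).exists_heq_id.2
  exact ⟨_, .funcId G s, .inl (.mk _)⟩

/-- The components in `S` are peeled off one at a time, each as a whiskering. -/
lemma decomposable_app_of_isId_or_singComp {k : ℕ} (G : F k) {s t : Fin k → GTerm V F}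
    (S : Finset (Fin k)) (g : ∀ j, PreMor V F E (s j) (t j))
    (hg : ∀ j, IsId (g j) ∨ (j ∈ S ∧ SingComp (g j))) :
    Decomposable (.app G g) := by
  induction S using Finset.induction_on generalizing t with
  | empty => exact decomposable_app_of_forall_isId G g fun j => (hg j).resolve_right (by simp)
  | insert i S _ ih =>
    rcases hg i with hgi | ⟨-, hgi⟩
    · refine ih g fun j => ?_
      by_cases hj : j = i
      · exact .inl (hj ▸ hgi)
      · exact (hg j).imp_right fun ⟨hjS, hsc⟩ => ⟨(Finset.mem_insert.1 hjS).resolve_left hj, hsc⟩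
    obtain ⟨g₁, g₂, hg₁₂, hg₁i, hg₂i, hg_ne⟩ :=
      exists_app_morEq_comp_update G g i (.id _) (g i) (.symm (.idComp _))
    refine .of_morEq hg₁₂ (.comp (ih g₁ fun j => ?_) ?_)
    · by_cases hj : j = i
      · subst hj
        exact .inl (hg₁i ▸ (IsId.mk _).recast _ _)
      · rw [(hg_ne j hj).1]
        exact (hg j).imp (IsId.recast _ _)
          fun ⟨hjS, hsc⟩ => ⟨(Finset.mem_insert.1 hjS).resolve_left hj, hsc.recast _ _⟩
    · obtain ⟨h, e, hh⟩ := hgi.whisker G g₂ i (Function.update_self ..) rfl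
        (hg₂i ▸ PreMor.recast_heq _ _ _) fun j hj => (hg_ne j hj).2 ▸ (IsId.mk _).recast _ _
      exact ⟨h, e, .inr hh⟩

lemma Decomposable.app {k : ℕ} (G : F k) {s t : Fin k → GTerm V F}
    {f : ∀ j, PreMor V F E (s j) (t j)} (hf : ∀ j, Decomposable (f j)) :
    Decomposable (.app G f) := by
  choose g hfg hg using hf
  exact .of_morEq (.appCongr G hfg) (decomposable_app_of_isId_or_singComp G .univ g
    fun j => (hg j).imp_right fun h => ⟨Finset.mem_univ j, h⟩)

end Decomposition

theorem morphism_is_composite_of_singulars_general (V : Type*) (F : ℕ → Type*)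
    (E : Set (GTerm V F × GTerm V F))
    (a b : GTerm V F) (f : PreMor V F E a b) :
    ∃ g : PreMor V F E a b, MorEq V F E f g ∧ (IsId g ∨ SingComp g) := by
  show Decomposable f
  induction f with
  | id t => exact ⟨_, .refl _, .inl (.mk t)⟩
  | gen s t h φ => exact ⟨_, .refl _, .inr (.single (.gen s t h φ))⟩
  | app G _ ih => exact .app G ih
  | comp _ _ ihp ihq => exact ihp.comp ihq

/-- STATEMENT 16: every morphism of the free category on the
precategorification of a balanced equational theory is (equal in the category
to) an identity or a finite composite of singular morphisms. -/
theorem morphism_is_composite_of_singulars (V : Type*) (F : ℕ → Type*)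
    (E : Set (GTerm V F × GTerm V F)) (hbal : BalancedTheory E)
    (a b : GTerm V F) (f : PreMor V F E a b) :
    ∃ g : PreMor V F E a b, MorEq V F E f g ∧ (IsId g ∨ SingComp g) :=
  morphism_is_composite_of_singulars_general V F E a b f
end

section
/- Any two n-ary trees T_1 and T_2 have a minimal common expansion: there exists an n-ary tree S such that S is an expansion of T_1 and of T_2, and every tree S' that is an expansion of both T_1 and T_2 is an expansion of S. -/
/-- `n`-ary trees. -/
inductive NTree (n : ℕ) : Type
  | leaf : NTree n
  | node : (Fin n → NTree n) → NTree n

namespace NTree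

variable {n : ℕ}

/-- The list of leaf addresses of an `n`-ary tree, in lexicographic
(left-to-right) order. -/
def leaves : NTree n → List (List (Fin n))
  | .leaf => [[]]
  | .node f => (List.ofFn fun i => (leaves (f i)).map (i :: ·)).flatten

/-- The number of internal nodes of a tree. -/
def internal : NTree n → ℕ
  | .leaf => 0
  | .node f => 1 + ∑ i, internal (f i)

/-- Simple expansion of trees: replace one leaf by a node all of whose
children are leaves. -/
inductive SimpleExp : NTree n → NTree n → Prop
  | base : SimpleExp .leaf (.node fun _ => .leaf)
  | congr (f : Fin n → NTree n) (j : Fin n) (t' : NTree n) :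
      SimpleExp (f j) t' → SimpleExp (.node f) (.node (Function.update f j t'))

/-- `S` is an expansion of `T` when it is obtained from `T` by finitely many
simple expansions. -/
def Expansion (T S : NTree n) : Prop := Relation.ReflTransGen SimpleExp T S

end NTree

/-! Expansions of `node f` are exactly the trees `node g` with each `g i` an expansion of `f i`,
and every tree is an expansion of `leaf`. Hence the expansion order is the componentwise order
with `leaf` at the bottom, and the minimal common expansion of two trees is their overlay `join`,
which follows whichever of the two trees goes deeper along every branch. -/

namespace NTree

variable {n : ℕ}

def join : NTree n → NTree n → NTree n
  | .leaf, t => t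
  | .node f, .leaf => .node f
  | .node f, .node g => .node fun i => join (f i) (g i)

theorem Expansion.node_update (f : Fin n → NTree n) (j : Fin n) {t : NTree n}
    (h : Expansion (f j) t) : Expansion (.node f) (.node (Function.update f j t)) := by
  induction h with
  | refl =>
      rw [Function.update_eq_self]
      exact .refl
  | @tail b c _ hbc ih =>
      refine ih.tail ?_
      simpa using SimpleExp.congr (Function.update f j b) j c (by simpa using hbc)

theorem Expansion.node {f g : Fin n → NTree n} (h : ∀ i, Expansion (f i) (g i)) :
    Expansion (.node f) (.node g) := by
  classical
  suffices key : ∀ s : Finset (Fin n), Expansion (.node f) (.node (s.piecewise g f)) by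
    simpa using key Finset.univ
  intro s
  induction s using Finset.induction_on with
  | empty =>
      rw [Finset.piecewise_empty]
      exact .refl
  | @insert j s hj ih =>
      rw [Finset.piecewise_insert]
      refine ih.trans (Expansion.node_update _ j ?_)
      simpa [Finset.piecewise_eq_of_notMem _ _ _ hj] using h j

theorem expansion_leaf (t : NTree n) : Expansion .leaf t := by
  induction t with
  | leaf => exact .refl
  | node f ih => exact .head .base (Expansion.node ih)

theorem Expansion.exists_eq_node {f : Fin n → NTree n} {S : NTree n}
    (h : Expansion (.node f) S) :
    ∃ g : Fin n → NTree n, S = .node g ∧ ∀ i, Expansion (f i) (g i) := by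
  induction h with
  | refl => exact ⟨f, rfl, fun _ => .refl⟩
  | @tail b c _ hbc ih =>
      obtain ⟨g, rfl, hg⟩ := ih
      cases hbc with
      | congr _ j t hj =>
          refine ⟨Function.update g j t, rfl, fun i => ?_⟩
          rcases eq_or_ne i j with rfl | hij
          · simpa using (show Expansion (f i) t from (hg i).tail hj)
          · simpa [Function.update_of_ne hij] using hg i

theorem expansion_join_left : ∀ t s : NTree n, Expansion t (join t s)
  | .leaf, s => expansion_leaf s
  | .node _, .leaf => .refl
  | .node f, .node g => Expansion.node fun i => expansion_join_left (f i) (g i)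

theorem expansion_join_right : ∀ t s : NTree n, Expansion s (join t s)
  | .leaf, _ => .refl
  | .node _, .leaf => expansion_leaf _
  | .node f, .node g => Expansion.node fun i => expansion_join_right (f i) (g i)

theorem Expansion.join : ∀ {t s S : NTree n},
    Expansion t S → Expansion s S → Expansion (join t s) S
  | .leaf, _, _, _, hs => hs
  | .node _, .leaf, _, ht, _ => ht
  | .node f, .node g, _, ht, hs => by
      obtain ⟨k, rfl, hk⟩ := ht.exists_eq_node
      obtain ⟨k', heq, hk'⟩ := hs.exists_eq_node
      obtain rfl : k = k' := by injection heq
      exact Expansion.node fun i => (hk i).join (hk' i)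

end NTree

theorem exists_minimal_common_expansion_general (n : ℕ) (T₁ T₂ : NTree n) :
    ∃ S : NTree n, NTree.Expansion T₁ S ∧ NTree.Expansion T₂ S ∧
      ∀ S' : NTree n, NTree.Expansion T₁ S' → NTree.Expansion T₂ S' →
        NTree.Expansion S S' :=
  ⟨T₁.join T₂, NTree.expansion_join_left T₁ T₂, NTree.expansion_join_right T₁ T₂,
    fun _ h₁ h₂ => h₁.join h₂⟩

/-- STATEMENT 18: any two `n`-ary trees have a minimal common expansion. -/
theorem exists_minimal_common_expansion (n : ℕ) (hn : 2 ≤ n) (T₁ T₂ : NTree n) :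
    ∃ S : NTree n, NTree.Expansion T₁ S ∧ NTree.Expansion T₂ S ∧
      ∀ S' : NTree n, NTree.Expansion T₁ S' → NTree.Expansion T₂ S' →
        NTree.Expansion S S' :=
  exists_minimal_common_expansion_general n T₁ T₂
end

section
/- For all n ≥ 2 and k ≥ 0, the set of n-ary trees having exactly k internal nodes is finite, and its cardinality c_k satisfies c_k · ((n−1)·k + 1) = C(n·k, k), the binomial coefficient; that is, the number of such trees is the generalized Catalan number C(nk,k)/((n−1)k+1). -/
namespace List

def IsLukasiewicz (l : List ℤ) : Prop :=
  l.sum = -1 ∧ ∀ j < l.length, 0 ≤ (l.take j).sum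

theorem IsLukasiewicz.eq_zero_of_rotate {l : List ℤ} (hl : l.IsLukasiewicz) {i : ℕ}
    (hi : i < l.length) (hrot : (l.rotate i).IsLukasiewicz) : i = 0 := by
  by_contra hi0
  have hdrop : 0 ≤ (l.drop i).sum := by
    have h := hrot.2 (l.length - i) (by simp; omega)
    rwa [rotate_eq_drop_append_take hi.le, take_left' (by simp)] at h
  linarith [hl.1, hl.2 i hi, l.sum_take_add_sum_drop i]

/-- The rotation starting at the first minimum of the partial sums `(l.take t).sum`,
`t < l.length`. -/
theorem exists_isLukasiewicz_rotate {l : List ℤ} (hl : l.sum = -1) :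
    ∃ i < l.length, (l.rotate i).IsLukasiewicz := by
  have hne : l ≠ [] := by rintro rfl; simp at hl
  obtain ⟨i, hi, hmin⟩ := (Finset.range l.length).exists_min_image
    (fun t => toLex ((l.take t).sum, t)) (by simp [hne])
  simp only [Finset.mem_range, Prod.Lex.toLex_le_toLex] at hi hmin
  have hle : ∀ t < l.length, (l.take i).sum ≤ (l.take t).sum := fun t ht =>
    (hmin t ht).elim le_of_lt (fun h => h.1.le)
  have hlt : ∀ t < i, (l.take i).sum < (l.take t).sum := fun t ht =>
    (hmin t (by omega)).resolve_right (by omega)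
  refine ⟨i, hi, by rw [(l.rotate_perm i).sum_eq, hl], fun j hj => ?_⟩
  rw [length_rotate] at hj
  have hsplit := l.sum_take_add_sum_drop i
  rw [rotate_eq_drop_append_take hi.le, take_append, sum_append, length_drop]
  rcases le_or_gt j (l.length - i) with hj' | hj'
  · rw [Nat.sub_eq_zero_of_le hj', take_zero, sum_nil, add_zero]
    rcases lt_or_eq_of_le hj' with h | h
    · have hij : (l.take (i + j)).sum = (l.take i).sum + ((l.drop i).take j).sum := by
        rw [take_add, sum_append]
      linarith [hle (i + j) (by omega)]
    · have h0 : (l.take i).sum < 0 := by simpa using hlt 0 (by omega)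
      rw [take_of_length_le (by simp; omega)]
      linarith
  · rw [take_of_length_le (by simp; omega), take_take, min_eq_left (by omega)]
    linarith [hlt (j - (l.length - i)) (by omega)]

theorem rotate_rotate_fin {α : Type*} {N : ℕ} [NeZero N] {l : List α} (hl : l.length = N)
    (i j : Fin N) : (l.rotate i).rotate j = l.rotate ↑(i + j) := by
  rw [rotate_rotate, Fin.val_add, ← rotate_mod l (↑i + ↑j), hl]

theorem rotate_rotate_neg {α : Type*} {N : ℕ} [NeZero N] {l : List α} (hl : l.length = N)
    (i : Fin N) : (l.rotate i).rotate ↑(-i) = l := by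
  simp [rotate_rotate_fin hl]

theorem ofFn_getD_eq_take {α : Type*} {m : ℕ} {l : List α} (d : α) (h : m ≤ l.length) :
    ofFn (fun i : Fin m => l.getD i d) = l.take m := by
  apply ext_getElem (by simp; omega)
  intro i h1 h2
  simp [getElem?_eq_getElem (show i < l.length by simp at h2; omega)]

theorem count_true_ofFn_decide_mem {N : ℕ} (s : Finset (Fin N)) :
    (ofFn fun i => decide (i ∈ s)).count true = s.card := by
  rw [← Multiset.coe_count, ← Fin.univ_val_map, Multiset.count_map]
  simp [← Finset.filter_val]

theorem ofFn_decide_mem_bijective (N k : ℕ) :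
    Function.Bijective fun s : {s : Finset (Fin N) // s.card = k} =>
      (⟨ofFn fun i => decide (i ∈ s.1), length_ofFn,
          by rw [count_true_ofFn_decide_mem, s.2]⟩ :
        {w : List Bool // w.length = N ∧ w.count true = k}) := by
  refine ⟨fun s t h => ?_, fun ⟨w, hlen, hcount⟩ => ?_⟩
  · have h' := congrFun (ofFn_injective (congrArg Subtype.val h))
    exact Subtype.ext (Finset.ext fun i => by simpa using h' i)
  · subst hlen
    set s := Finset.univ.filter fun i : Fin w.length => w[i] = true
    have hs : (ofFn fun i => decide (i ∈ s)) = w := by simp [s]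
    exact ⟨⟨s, by rw [← count_true_ofFn_decide_mem, hs, hcount]⟩, Subtype.ext hs⟩

end List

namespace NTree

variable {n : ℕ}

def code : NTree n → List Bool
  | leaf => [false]
  | node f => true :: (List.ofFn fun i => code (f i)).flatten

def decode (n : ℕ) : List Bool → List (NTree n)
  | [] => []
  | false :: l => leaf :: decode n l
  | true :: l => node (fun i => (decode n l).getD i leaf) :: (decode n l).drop n

/-- `m` counts the subtrees still to be read: a node replaces one pending subtree by `n`. -/
def IsForestCode (n : ℕ) : ℕ → List Bool → Prop
  | m, [] => m = 0
  | 0, _ :: _ => False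
  | m + 1, false :: l => IsForestCode n m l
  | m + 1, true :: l => IsForestCode n (m + n) l

def weight (n : ℕ) : Bool → ℤ
  | false => -1
  | true => n - 1

theorem length_code (T : NTree n) : (code T).length = n * T.internal + 1 := by
  induction T with
  | leaf => simp [code, internal]
  | node f ih =>
    simp only [code, internal, List.length_cons, List.length_flatten, List.map_ofFn,
      List.sum_ofFn, Function.comp_def, ih, Finset.sum_add_distrib]
    simp [mul_add, Finset.mul_sum, add_comm]

theorem count_code (T : NTree n) : (code T).count true = T.internal := by
  induction T with
  | leaf => simp [code, internal]
  | node f ih =>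
    simp [code, internal, List.count_flatten, List.map_ofFn, List.sum_ofFn, Function.comp_def, ih,
      add_comm]

theorem decode_code_append (T : NTree n) (l : List Bool) :
    decode n (code T ++ l) = T :: decode n l := by
  induction T generalizing l with
  | leaf => rfl
  | node f ih =>
    have hforest : ∀ ts : List (NTree n),
        (∀ T ∈ ts, ∀ l, decode n (code T ++ l) = T :: decode n l) →
        decode n ((ts.map code).flatten ++ l) = ts ++ decode n l := by
      intro ts hts
      induction ts with
      | nil => rfl
      | cons T ts ih' =>
        simp only [List.map_cons, List.flatten_cons, List.append_assoc, List.cons_append]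
        rw [hts T (by simp), ih' (fun T hT => hts T (by simp [hT]))]
    have h :
        decode n ((List.ofFn fun i => code (f i)).flatten ++ l) = List.ofFn f ++ decode n l := by
      simpa [List.map_ofFn, Function.comp_def] using
        hforest (List.ofFn f) (by simpa [List.mem_ofFn] using ih)
    simp only [code, List.cons_append, decode, h]
    congr
    · funext i; simp [List.getElem?_append_left]
    · exact List.drop_left' (by simp)

theorem code_injective : Function.Injective (code : NTree n → List Bool) := fun T T' h => by
  have hT := decode_code_append T []
  rw [h, decode_code_append] at hT
  exact (List.cons_eq_cons.mp hT).1.symm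

theorem IsForestCode.decode_spec {m : ℕ} {l : List Bool} (h : IsForestCode n m l) :
    (decode n l).length = m ∧ ((decode n l).map code).flatten = l := by
  induction l generalizing m with
  | nil => simp only [IsForestCode] at h; simp [decode, h]
  | cons b l ih =>
    obtain _ | m := m
    · simp [IsForestCode] at h
    cases b with
    | false => simpa [decode, code] using ih (m := m) h
    | true =>
      obtain ⟨hlen, hflat⟩ := ih (m := m + n) h
      refine ⟨by simp [decode, hlen], ?_⟩
      simp only [decode, List.map_cons, List.flatten_cons, code, List.cons_append]
      have hchildren : (List.ofFn fun i : Fin n => code ((decode n l).getD i leaf)) =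
          ((decode n l).take n).map code := by
        rw [← List.ofFn_getD_eq_take leaf (by omega), List.map_ofFn]; rfl
      rw [hchildren, ← List.flatten_append, ← List.map_append, List.take_append_drop, hflat]

theorem IsForestCode.exists_code_eq {l : List Bool} (h : IsForestCode n 1 l) :
    ∃ T : NTree n, code T = l := by
  obtain ⟨hlen, hflat⟩ := h.decode_spec
  obtain ⟨T, hT⟩ := List.length_eq_one_iff.mp hlen
  exact ⟨T, by simpa [hT] using hflat⟩

theorem isForestCode_code_append (T : NTree n) (m : ℕ) (l : List Bool) :
    IsForestCode n (m + 1) (code T ++ l) ↔ IsForestCode n m l := by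
  induction T generalizing m l with
  | leaf => rfl
  | node f ih =>
    have hforest : ∀ ts : List (NTree n),
        (∀ T ∈ ts, ∀ m l, IsForestCode n (m + 1) (code T ++ l) ↔ IsForestCode n m l) →
        (IsForestCode n (m + ts.length) ((ts.map code).flatten ++ l) ↔ IsForestCode n m l) := by
      intro ts hts
      induction ts with
      | nil => rfl
      | cons T ts ih' =>
        simp only [List.map_cons, List.flatten_cons, List.append_assoc, List.length_cons,
          ← add_assoc]
        rw [hts T (by simp), ih' (fun T hT => hts T (by simp [hT]))]
    have h := hforest (List.ofFn f) (by simpa [List.mem_ofFn] using ih)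
    simpa [List.map_ofFn, Function.comp_def, code, IsForestCode] using h

theorem isForestCode_code (T : NTree n) : IsForestCode n 1 (code T) := by
  simpa [IsForestCode] using (isForestCode_code_append T 0 []).mpr

theorem isForestCode_iff {m : ℕ} {l : List Bool} : IsForestCode n m l ↔
    (m : ℤ) + (l.map (weight n)).sum = 0 ∧
      ∀ j < l.length, 0 < (m : ℤ) + ((l.map (weight n)).take j).sum := by
  induction l generalizing m with
  | nil => simp [IsForestCode]
  | cons b l ih =>
    simp only [List.map_cons, List.sum_cons, List.length_cons, Nat.forall_lt_succ_left,
      List.take_zero, List.sum_nil, List.take_succ_cons]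
    obtain _ | m := m
    · simp [IsForestCode]
    cases b <;> simp only [IsForestCode, ih, weight]
    all_goals
      push_cast
      refine and_congr (by constructor <;> intro h <;> linarith)
        ⟨fun h => ⟨by positivity, fun j hj => by linarith [h j hj]⟩,
          fun h j hj => by linarith [h.2 j hj]⟩

theorem isLukasiewicz_map_weight_iff {l : List Bool} :
    (l.map (weight n)).IsLukasiewicz ↔ IsForestCode n 1 l := by
  rw [isForestCode_iff, List.IsLukasiewicz, List.length_map]
  push_cast
  exact and_congr (by constructor <;> intro h <;> linarith)
    (forall₂_congr fun j _ => by constructor <;> intro h <;> linarith)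

theorem isLukasiewicz_code (T : NTree n) : ((code T).map (weight n)).IsLukasiewicz :=
  isLukasiewicz_map_weight_iff.mpr (isForestCode_code T)

theorem sum_map_weight (l : List Bool) :
    (l.map (weight n)).sum = n * l.count true - l.length := by
  induction l with
  | nil => simp
  | cons b l ih => cases b <;> simp [weight, ih] <;> ring

def rotatedCode (k : ℕ) (p : {T : NTree n // T.internal = k} × Fin (n * k + 1)) :
    {w : List Bool // w.length = n * k + 1 ∧ w.count true = k} :=
  ⟨(code p.1.1).rotate p.2, by simp [length_code, p.1.2],
    by rw [(List.rotate_perm _ _).count_eq, count_code, p.1.2]⟩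

theorem rotatedCode_injective (k : ℕ) : Function.Injective (rotatedCode (n := n) k) := by
  rintro ⟨⟨T, hT⟩, i⟩ ⟨⟨T', hT'⟩, j⟩ h
  have hlen : (code T).length = n * k + 1 := by rw [length_code, hT]
  have hrot : (code T).rotate ↑(i - j) = code T' := by
    have h' : (code T).rotate i = (code T').rotate j := congrArg Subtype.val h
    rw [sub_eq_add_neg, ← List.rotate_rotate_fin hlen, h']
    exact List.rotate_rotate_neg (by rw [length_code, hT']) j
  have hij : i = j := by
    have h0 := (isLukasiewicz_code T).eq_zero_of_rotate (i := ↑(i - j))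
      (by rw [List.length_map, hlen]; exact Fin.is_lt _)
      (by rw [← List.map_rotate, hrot]; exact isLukasiewicz_code T')
    exact sub_eq_zero.mp (Fin.ext h0)
  subst hij
  obtain rfl : T = T' := code_injective (by simpa using hrot)
  rfl

theorem rotatedCode_surjective (k : ℕ) : Function.Surjective (rotatedCode (n := n) k) := by
  rintro ⟨w, hlen, hcount⟩
  have hsum : (w.map (weight n)).sum = -1 := by
    rw [sum_map_weight, hlen, hcount]; push_cast; ring
  obtain ⟨i, hi, hluk⟩ := List.exists_isLukasiewicz_rotate hsum
  rw [← List.map_rotate, isLukasiewicz_map_weight_iff] at hluk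
  obtain ⟨T, hT⟩ := hluk.exists_code_eq
  have hTk : T.internal = k := by
    rw [← count_code, hT, (w.rotate_perm i).count_eq, hcount]
  let i' : Fin (n * k + 1) := ⟨i, by simpa [hlen] using hi⟩
  refine ⟨(⟨T, hTk⟩, -i'), Subtype.ext ?_⟩
  exact (congrArg (List.rotate · _) hT).trans (List.rotate_rotate_neg hlen i')

end NTree

/-- STATEMENT 19: the set of `n`-ary trees with exactly `k` internal nodes is
finite, of cardinality the generalized Catalan number
`C(nk, k) / ((n-1)k + 1)`. -/
theorem card_trees_internal_eq_catalan (n : ℕ) (hn : 2 ≤ n) (k : ℕ) :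
    {T : NTree n | NTree.internal T = k}.Finite ∧
      Nat.card {T : NTree n | NTree.internal T = k} * ((n - 1) * k + 1) =
        Nat.choose (n * k) k := by
  let e : {T : NTree n // T.internal = k} × Fin (n * k + 1) ≃
      {s : Finset (Fin (n * k + 1)) // s.card = k} :=
    (Equiv.ofBijective _ ⟨NTree.rotatedCode_injective k, NTree.rotatedCode_surjective k⟩).trans
      (Equiv.ofBijective _ (List.ofFn_decide_mem_bijective _ k)).symm
  have hprod : Finite ({T : NTree n // T.internal = k} × Fin (n * k + 1)) :=
    Finite.of_equiv _ e.symm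
  have hfin : Finite {T : NTree n // T.internal = k} := Finite.prod_left (Fin (n * k + 1))
  refine ⟨Set.finite_coe_iff.mp hfin, ?_⟩
  have hcard : Nat.card {T : NTree n // T.internal = k} * (n * k + 1) = (n * k + 1).choose k := by
    simpa [Nat.card_prod] using Nat.card_congr e
  have hsub : (n - 1) * k + 1 = n * k + 1 - k := by
    have := Nat.le_mul_of_pos_left k (show 0 < n by omega)
    rw [Nat.sub_one_mul]; omega
  apply Nat.eq_of_mul_eq_mul_right (Nat.succ_pos (n * k))
  calc Nat.card {T : NTree n // T.internal = k} * ((n - 1) * k + 1) * (n * k + 1)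
      = (n * k + 1).choose k * (n * k + 1 - k) := by rw [← hcard, hsub]; ring
    _ = (n * k).choose k * (n * k + 1) := (Nat.choose_mul_succ_eq _ _).symm
end
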